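/- Positivity of the Wald-type quadratic form under alternatives (core of the consistency part of Theorem 2): Let k ≥ 1 and r ≥ 1, let Σ be a symmetric positive definite k×k real matrix, H an r×k real matrix, and C ∈ ℝ^k with H·C ≠ 0. Let P be any r×r real matrix satisfying the four Penrose equations for M = H·Σ·Hᵀ, namely M·P·M = M, P·M·P = P, (M·P)ᵀ = M·P and (P·M)ᵀ = P·M (i.e. P is the Moore–Penrose inverse of M). Then (H·C)ᵀ·P·(H·C) > 0. -/

import Mathlib

open Matrix

/-!
Write `M = H Σ Hᵀ`. Since `Σ` is positive definite, `M w = 0` forces `Hᵀ w = 0`, so `M` and `H`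
have the same rank and hence the same column space; thus `H C = M w` for some `w`. By the symmetry
of `M` and `M P M = M`, `(H C)ᵀ P (H C) = wᵀ M P M w = wᵀ M w = (Hᵀ w)ᵀ Σ (Hᵀ w)`, which is
positive because `Hᵀ w = 0` would give `H C = M w = 0`.
-/

namespace Matrix

variable {m n : Type*} [Fintype m] [Fintype n]

theorem dotProduct_mulVec_mul_mul_transpose (H : Matrix m n ℝ) (S : Matrix n n ℝ) (w : m → ℝ) :
    w ⬝ᵥ (H * S * Hᵀ) *ᵥ w = (Hᵀ *ᵥ w) ⬝ᵥ S *ᵥ (Hᵀ *ᵥ w) := by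
  rw [← mulVec_mulVec, ← mulVec_mulVec, dotProduct_mulVec, mulVec_transpose]

theorem PosDef.dotProduct_mulVec_mul_mul_transpose_pos {S : Matrix n n ℝ} (hS : S.PosDef)
    (H : Matrix m n ℝ) {w : m → ℝ} (hw : Hᵀ *ᵥ w ≠ 0) :
    0 < w ⬝ᵥ (H * S * Hᵀ) *ᵥ w := by
  rw [dotProduct_mulVec_mul_mul_transpose]
  exact hS.dotProduct_mulVec_pos hw

theorem PosDef.ker_mulVecLin_mul_mul_transpose {S : Matrix n n ℝ} (hS : S.PosDef)
    (H : Matrix m n ℝ) :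
    LinearMap.ker (H * S * Hᵀ).mulVecLin = LinearMap.ker Hᵀ.mulVecLin := by
  ext w
  simp only [LinearMap.mem_ker, mulVecLin_apply]
  refine ⟨fun hw => ?_, fun hw => by rw [← mulVec_mulVec, hw, mulVec_zero]⟩
  by_contra hne
  have := hS.dotProduct_mulVec_mul_mul_transpose_pos H hne
  rw [hw, dotProduct_zero] at this
  exact this.false

theorem PosDef.range_mulVecLin_mul_mul_transpose {S : Matrix n n ℝ} (hS : S.PosDef)
    (H : Matrix m n ℝ) :
    LinearMap.range (H * S * Hᵀ).mulVecLin = LinearMap.range H.mulVecLin := by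
  refine Submodule.eq_of_le_of_finrank_eq ?_ ?_
  · rintro _ ⟨w, rfl⟩
    exact ⟨(S * Hᵀ) *ᵥ w, by simp only [mulVecLin_apply, mulVec_mulVec, Matrix.mul_assoc]⟩
  · have hker : Module.finrank ℝ (LinearMap.ker (H * S * Hᵀ).mulVecLin) =
        Module.finrank ℝ (LinearMap.ker Hᵀ.mulVecLin) := by
      rw [hS.ker_mulVecLin_mul_mul_transpose H]
    have hM := LinearMap.finrank_range_add_finrank_ker (H * S * Hᵀ).mulVecLin
    have hHt := LinearMap.finrank_range_add_finrank_ker Hᵀ.mulVecLin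
    have hrank : Hᵀ.rank = H.rank := rank_transpose H
    rw [rank, rank] at hrank
    omega

theorem dotProduct_mulVec_mulVec_of_mul_mul_eq_self {M P : Matrix m m ℝ} (hM : Mᵀ = M)
    (hMPM : M * P * M = M) (w : m → ℝ) :
    (M *ᵥ w) ⬝ᵥ P *ᵥ (M *ᵥ w) = w ⬝ᵥ M *ᵥ w := by
  calc (M *ᵥ w) ⬝ᵥ P *ᵥ (M *ᵥ w) = (w ᵥ* Mᵀ) ⬝ᵥ P *ᵥ (M *ᵥ w) := by rw [vecMul_transpose]
    _ = w ⬝ᵥ (M * P * M) *ᵥ w := by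
      rw [← dotProduct_mulVec, mulVec_mulVec, mulVec_mulVec, hM, Matrix.mul_assoc]
    _ = w ⬝ᵥ M *ᵥ w := by rw [hMPM]

end Matrix

theorem waldQuadForm_pos_of_alternative
    (k r : ℕ)
    (S : Matrix (Fin k) (Fin k) ℝ) (hS : S.PosDef)
    (H : Matrix (Fin r) (Fin k) ℝ) (C : Fin k → ℝ)
    (hHC : H.mulVec C ≠ 0)
    (P : Matrix (Fin r) (Fin r) ℝ)
    (hP1 : (H * S * Hᵀ) * P * (H * S * Hᵀ) = H * S * Hᵀ) :
    0 < H.mulVec C ⬝ᵥ P.mulVec (H.mulVec C) := by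
  obtain ⟨w, hw⟩ : H *ᵥ C ∈ LinearMap.range (H * S * Hᵀ).mulVecLin := by
    rw [hS.range_mulVecLin_mul_mul_transpose]
    exact ⟨C, rfl⟩
  rw [mulVecLin_apply] at hw
  have hM : (H * S * Hᵀ)ᵀ = H * S * Hᵀ := by
    rw [transpose_mul, transpose_mul, transpose_transpose, ← conjTranspose_eq_transpose_of_trivial,
      hS.isHermitian.eq, Matrix.mul_assoc]
  rw [← hw, dotProduct_mulVec_mulVec_of_mul_mul_eq_self hM hP1]
  refine hS.dotProduct_mulVec_mul_mul_transpose_pos H fun hHw => hHC ?_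
  rw [← hw, ← mulVec_mulVec, hHw, mulVec_zero]
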